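/- In the multi-region setup, fix a region r with I_r nonempty and a nonnegative integer k. Assume: (i) for every image i ∈ I_r and region t ∈ Ī_i, ‖Q_{t,i}ᵀ(L_t − L*_t)e_{f_t^i}‖_{ℓ2} ≤ l₀·σ*_t·qᵏ/√(n_t); (ii) for every region t ∈ U_r, E_t = S*_t − S_t has at most α_t·m_t nonzero entries per column and ‖E_t‖_{ℓ∞} ≤ s₀·σ*_t·qᵏ/√(m_t n_t); (iii) ‖P^i_{r,t}‖_2 ≤ √(σ*_r/σ*_t)·(m_t n_t/(m_r n_r))^{1/4} for all i ∈ I_r, t ∈ Ī_i; (iv) ‖Q_{t,i}ᵀe_p‖_{ℓ2} ≤ ν√(d/m_t) for all t, i and row indices p. Define G_r = Σ_{i∈I_r}Σ_{t∈Ī_i} Q_{r,i}P^i_{r,t}Q_{t,i}ᵀ(L_t − L*_t)e_{f_t^i}e_{f_r^i}ᵀ, F_r = Σ_{i∈I_r}Σ_{t∈Ī_i} Q_{r,i}P^i_{r,t}Q_{t,i}ᵀ(S_t − S*_t)e_{f_t^i}e_{f_r^i}ᵀ, and M_r = G_r + F_r + E_r. Then for every u ∈ ℝ^{m_r}: ‖M_rᵀu‖_{ℓ∞}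 ≤ [ l₀·ν·√d·ω_r + s₀·(1 + ν²d)·α̃_r ]·σ*_r·qᵏ·√(m_r/n_r)·‖u‖_{ℓ∞}, where ω_r = Σ_{t∈U_r}√(σ*_t/σ*_r)·(m_t n_r/(m_r n_t))^{1/4} and α̃_r = Σ_{t∈U_r} α_t·√(σ*_t/σ*_r)·(m_t n_r/(m_r n_t))^{1/4}. -/

import Mathlib

open Matrix
open scoped BigOperators

noncomputable def l2 {n : ℕ} (v : Fin n → ℝ) : ℝ := Real.sqrt (∑ i, v i ^ 2)

noncomputable def vinf {n : ℕ} (v : Fin n → ℝ) : ℝ := ⨆ i, |v i|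

noncomputable def linf {m n : ℕ} (X : Matrix (Fin m) (Fin n) ℝ) : ℝ := ⨆ i, ⨆ j, |X i j|

noncomputable def frob {m n : ℕ} (X : Matrix (Fin m) (Fin n) ℝ) : ℝ :=
  Real.sqrt (∑ i, ∑ j, X i j ^ 2)

noncomputable def spec {m n : ℕ} (X : Matrix (Fin m) (Fin n) ℝ) : ℝ :=
  ‖LinearMap.toContinuousLinearMap (Matrix.toEuclideanLin X)‖

def supp {m n : ℕ} (X : Matrix (Fin m) (Fin n) ℝ) : Set (Fin m × Fin n) :=
  {p | X p.1 p.2 ≠ 0}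

noncomputable def sthr {m n : ℕ} (ζ : ℝ) (X : Matrix (Fin m) (Fin n) ℝ) :
    Matrix (Fin m) (Fin n) ℝ :=
  Matrix.of fun i j => Real.sign (X i j) * max (|X i j| - ζ) 0

/-!
Fix a column `j = f_r^i`. Only image `i` contributes to column `j` of `G_r` and `F_r`, so
`(M_rᵀ u)_j` is a sum over `t ∈ Ī_i` of terms `⟪P^i_{r,t} Q_{t,i}ᵀ w_t, Q_{r,i}ᵀ u⟫`, plus
`⟪E_r e_j, u⟫`. Cauchy–Schwarz bounds each term by `‖P‖₂ ‖Q_{t,i}ᵀ w_t‖ ‖Q_{r,i}ᵀ u‖`, and the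
incoherence bound (iv), applied column by column, gives `‖Q_{r,i}ᵀ u‖ ≤ ν √(d m_r) ‖u‖_∞`.
For `G_r` the middle factor is bounded by (i); for `F_r` and `E_r` the relevant column of `E_t`
has at most `α_t m_t` nonzero entries, each at most `‖E_t‖_{ℓ∞}`. The constants recombine through
`√(σ_r/σ_t) (m_t n_t/(m_r n_r))^{1/4} · σ_t √m_r/√n_t = √(σ_t/σ_r) (m_t n_r/(m_r n_t))^{1/4} · σ_r √(m_r/n_r)`,
and `α_r ≤ α̃_r` because `r ∈ U_r` carries weight `1`.
-/

open Finset

lemma l2_eq_norm {m : ℕ} (v : Fin m → ℝ) : l2 v = ‖WithLp.toLp 2 v‖ := by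
  simp [l2, EuclideanSpace.norm_eq]

lemma l2_nonneg {m : ℕ} (v : Fin m → ℝ) : 0 ≤ l2 v := Real.sqrt_nonneg _

lemma l2_neg {m : ℕ} (v : Fin m → ℝ) : l2 (-v) = l2 v := by simp [l2]

lemma abs_le_vinf {m : ℕ} (v : Fin m → ℝ) (p : Fin m) : |v p| ≤ vinf v :=
  le_ciSup (f := fun i => |v i|) (Set.finite_range _).bddAbove p

lemma vinf_nonneg {m : ℕ} (v : Fin m → ℝ) : 0 ≤ vinf v :=
  Real.iSup_nonneg fun _ => abs_nonneg _

lemma abs_le_linf {m n : ℕ} (X : Matrix (Fin m) (Fin n) ℝ) (p : Fin m) (j : Fin n) :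
    |X p j| ≤ linf X :=
  (le_ciSup (Set.finite_range _).bddAbove j).trans
    (le_ciSup (f := fun i => ⨆ j, |X i j|) (Set.finite_range _).bddAbove p)

lemma abs_dotProduct_le_l2_mul_l2 {m : ℕ} (a b : Fin m → ℝ) : |a ⬝ᵥ b| ≤ l2 a * l2 b := by
  rw [l2_eq_norm, l2_eq_norm]
  simpa [PiLp.inner_apply, dotProduct, mul_comm] using
    abs_real_inner_le_norm (WithLp.toLp 2 a) (WithLp.toLp 2 b)

lemma l2_mulVec_le_spec_mul {m n : ℕ} (A : Matrix (Fin m) (Fin n) ℝ) (v : Fin n → ℝ) :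
    l2 (A *ᵥ v) ≤ spec A * l2 v := by
  rw [l2_eq_norm, l2_eq_norm]
  simpa [spec] using
    (LinearMap.toContinuousLinearMap (Matrix.toEuclideanLin A)).le_opNorm (WithLp.toLp 2 v)

lemma abs_dotProduct_mul_mul_transpose_mulVec_le {m k d : ℕ} (A : Matrix (Fin m) (Fin d) ℝ)
    (B : Matrix (Fin d) (Fin d) ℝ) (C : Matrix (Fin k) (Fin d) ℝ) (w : Fin k → ℝ)
    (u : Fin m → ℝ) :
    |((A * B * Cᵀ) *ᵥ w) ⬝ᵥ u| ≤ spec B * l2 (Cᵀ *ᵥ w) * l2 (Aᵀ *ᵥ u) := by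
  rw [← Matrix.mulVec_mulVec, ← Matrix.mulVec_mulVec, dotProduct_comm,
    Matrix.dotProduct_mulVec, ← Matrix.mulVec_transpose, dotProduct_comm]
  exact (abs_dotProduct_le_l2_mul_l2 _ _).trans
    (mul_le_mul_of_nonneg_right (l2_mulVec_le_spec_mul _ _) (l2_nonneg _))

lemma norm_sum_smul_le_card_support_mul {ι E : Type*} [Fintype ι] [SeminormedAddCommGroup E]
    [NormedSpace ℝ E] (x : ι → ℝ) (w : ι → E) {a b : ℝ} (ha : ∀ p, |x p| ≤ a)
    (hb : ∀ p, ‖w p‖ ≤ b) :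
    ‖∑ p, x p • w p‖ ≤ (univ.filter fun p => x p ≠ 0).card * (a * b) := by
  rw [← sum_filter_of_ne fun p _ h => left_ne_zero_of_smul h, ← nsmul_eq_mul]
  refine (norm_sum_le _ _).trans (sum_le_card_nsmul _ _ _ fun p _ => ?_)
  rw [norm_smul, Real.norm_eq_abs]
  exact mul_le_mul (ha p) (hb p) (norm_nonneg _) ((abs_nonneg _).trans (ha p))

lemma l2_mulVec_le_card_support_mul {m k : ℕ} (A : Matrix (Fin k) (Fin m) ℝ) (x : Fin m → ℝ)
    {a b : ℝ} (ha : ∀ p, |x p| ≤ a) (hb : ∀ p, l2 (A *ᵥ Pi.single p 1) ≤ b) :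
    l2 (A *ᵥ x) ≤ (univ.filter fun p => x p ≠ 0).card * (a * b) := by
  have hx : A *ᵥ x = ∑ p, x p • A *ᵥ Pi.single p 1 := by
    ext q
    simp [Matrix.mulVec, dotProduct, mul_comm]
  rw [l2_eq_norm, hx, WithLp.toLp_sum]
  simp only [WithLp.toLp_smul]
  exact norm_sum_smul_le_card_support_mul _ _ ha fun p => (l2_eq_norm _).symm.trans_le (hb p)

lemma abs_dotProduct_le_card_support_mul {m : ℕ} (x u : Fin m → ℝ) {a b : ℝ}
    (ha : ∀ p, |x p| ≤ a) (hb : ∀ p, |u p| ≤ b) :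
    |x ⬝ᵥ u| ≤ (univ.filter fun p => x p ≠ 0).card * (a * b) :=
  norm_sum_smul_le_card_support_mul x u ha hb

lemma l2_mulVec_le_mul_vinf {m k : ℕ} (A : Matrix (Fin k) (Fin m) ℝ) (u : Fin m → ℝ) {b : ℝ}
    (hb0 : 0 ≤ b) (hb : ∀ p, l2 (A *ᵥ Pi.single p 1) ≤ b) :
    l2 (A *ᵥ u) ≤ m * b * vinf u := by
  refine (l2_mulVec_le_card_support_mul A u (abs_le_vinf u) hb).trans ?_
  have hcard : ((univ.filter fun p => u p ≠ 0).card : ℝ) ≤ m := by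
    exact_mod_cast (card_filter_le _ _).trans (card_univ.trans (Fintype.card_fin m)).le
  exact (mul_le_mul_of_nonneg_right hcard (mul_nonneg (vinf_nonneg u) hb0)).trans_eq (by ring)

lemma transpose_sum_vecMulVec_single_mulVec_apply {ι κ : Type*} {m n : ℕ} (s : Finset ι)
    (T : ι → Finset κ) (v : ι → κ → Fin m → ℝ) (g : ι → Fin n) (hg : Set.InjOn g s)
    (u : Fin m → ℝ) {i : ι} (hi : i ∈ s) :
    ((∑ i' ∈ s, ∑ t ∈ T i', Matrix.vecMulVec (v i' t) (Pi.single (g i') 1))ᵀ *ᵥ u) (g i) =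
      ∑ t ∈ T i, v i t ⬝ᵥ u := by
  simp only [Matrix.mulVec_transpose, Matrix.vecMul_sum, Matrix.vecMul_vecMulVec,
    Finset.sum_apply, Pi.smul_apply, smul_eq_mul]
  rw [sum_eq_single_of_mem i hi]
  · simp [dotProduct_comm]
  · intro i' hi' hne
    have hgne : g i ≠ g i' := fun h => hne (hg hi' hi h.symm)
    simp [hgne]

lemma sqrt_div_mul_rpow_quarter_eq {σr σt mr nr mt nt : ℝ} (hσr : 0 < σr) (hσt : 0 < σt)
    (hmr : 0 < mr) (hnr : 0 < nr) (hmt : 0 < mt) (hnt : 0 < nt) :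
    √(σr / σt) * ((mt * nt) / (mr * nr)) ^ ((1 : ℝ) / 4) * (σt * √mr / √nt) =
      √(σt / σr) * ((mt * nr) / (mr * nt)) ^ ((1 : ℝ) / 4) * (σr * √(mr / nr)) := by
  -- both sides are positive; their fourth powers are rational in the data
  refine (pow_left_inj₀ (by positivity) (by positivity) four_ne_zero).1 ?_
  have hsqrt : ∀ {x : ℝ}, 0 ≤ x → √x ^ 4 = x ^ 2 := fun hx => by
    rw [show 4 = 2 * 2 from rfl, pow_mul, Real.sq_sqrt hx]
  have hquarter : ∀ {x : ℝ}, 0 ≤ x → (x ^ ((1 : ℝ) / 4)) ^ 4 = x := fun hx => by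
    rw [← Real.rpow_natCast, ← Real.rpow_mul hx]; norm_num
  simp (disch := positivity) only [mul_pow, div_pow, hsqrt, hquarter]
  field_simp

lemma abs_transfer_term_le {mr nr mt nt d : ℕ} (Qr : Matrix (Fin mr) (Fin d) ℝ)
    (Qt : Matrix (Fin mt) (Fin d) ℝ) (P : Matrix (Fin d) (Fin d) ℝ) (w : Fin mt → ℝ)
    (u : Fin mr → ℝ) {σr σt ν β : ℝ} (hσr : 0 < σr) (hσt : 0 < σt) (hmr : 0 < mr)
    (hnr : 0 < nr) (hmt : 0 < mt) (hnt : 0 < nt) (hν : 0 ≤ ν)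
    (hP : spec P ≤ √(σr / σt) * (((mt : ℝ) * nt) / ((mr : ℝ) * nr)) ^ ((1 : ℝ) / 4))
    (hQr : ∀ p, l2 (Qrᵀ *ᵥ Pi.single p 1) ≤ ν * √((d : ℝ) / mr))
    (hw : l2 (Qtᵀ *ᵥ w) ≤ β * σt / √nt) :
    |((Qr * P * Qtᵀ) *ᵥ w) ⬝ᵥ u| ≤
      β * (√(σt / σr) * (((mt : ℝ) * nr) / ((mr : ℝ) * nt)) ^ ((1 : ℝ) / 4)) *
        (ν * √d * σr * √((mr : ℝ) / nr) * vinf u) := by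
  have hβ : 0 ≤ β * σt / √nt := (l2_nonneg _).trans hw
  have hu := l2_mulVec_le_mul_vinf Qrᵀ u (by positivity) hQr
  have hmr_sqrt : (mr : ℝ) * √((d : ℝ) / mr) = √d * √mr := by
    rw [Real.sqrt_div' _ (Nat.cast_nonneg _)]
    field_simp
    rw [Real.sq_sqrt (Nat.cast_nonneg _), mul_comm]
  calc |((Qr * P * Qtᵀ) *ᵥ w) ⬝ᵥ u|
      ≤ spec P * l2 (Qtᵀ *ᵥ w) * l2 (Qrᵀ *ᵥ u) :=
        abs_dotProduct_mul_mul_transpose_mulVec_le Qr P Qt w u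
    _ ≤ (√(σr / σt) * (((mt : ℝ) * nt) / ((mr : ℝ) * nr)) ^ ((1 : ℝ) / 4)) *
          (β * σt / √nt) * (mr * (ν * √((d : ℝ) / mr)) * vinf u) := by
        gcongr <;> exact l2_nonneg _
    _ = β * ν * √d * vinf u * (√(σr / σt) * (((mt : ℝ) * nt) / ((mr : ℝ) * nr)) ^ ((1 : ℝ) / 4) *
          (σt * √mr / √nt)) := by
        rw [mul_left_comm _ ν, mul_assoc ν, hmr_sqrt]
        ring
    _ = _ := by
        rw [sqrt_div_mul_rpow_quarter_eq hσr hσt (by positivity) (by positivity) (by positivity)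
          (by positivity)]
        ring

lemma l2_mulVec_col_le_of_sparse {m n d : ℕ} (Q : Matrix (Fin m) (Fin d) ℝ)
    (E : Matrix (Fin m) (Fin n) ℝ) (j : Fin n) {α s ν : ℝ} (hm : 0 < m) (hn : 0 < n)
    (hν : 0 ≤ ν) (hcol : ((univ.filter fun p => E p j ≠ 0).card : ℝ) ≤ α * m)
    (hE : linf E ≤ s / √((m : ℝ) * n))
    (hQ : ∀ p, l2 (Qᵀ *ᵥ Pi.single p 1) ≤ ν * √((d : ℝ) / m)) :
    l2 (Qᵀ *ᵥ fun p => E p j) ≤ α * s * ν * √d / √n := by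
  have hlinf : 0 ≤ linf E := (abs_nonneg _).trans (abs_le_linf E ⟨0, hm⟩ j)
  calc l2 (Qᵀ *ᵥ fun p => E p j)
      ≤ (univ.filter fun p => E p j ≠ 0).card * (linf E * (ν * √((d : ℝ) / m))) :=
        l2_mulVec_le_card_support_mul _ _ (fun p => abs_le_linf E p j) hQ
    _ ≤ α * m * (s / √((m : ℝ) * n) * (ν * √((d : ℝ) / m))) := by
        gcongr
        exact (Nat.cast_nonneg _).trans hcol
    _ = α * s * ν * √d / √n := by
        rw [Real.sqrt_mul (Nat.cast_nonneg _), Real.sqrt_div' _ (Nat.cast_nonneg _)]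
        field_simp
        rw [Real.sq_sqrt (Nat.cast_nonneg _)]
        ring

lemma abs_transpose_mulVec_apply_le_of_sparse {m n : ℕ} (E : Matrix (Fin m) (Fin n) ℝ)
    (u : Fin m → ℝ) (j : Fin n) {α s : ℝ} (hm : 0 < m) (hn : 0 < n)
    (hcol : ((univ.filter fun p => E p j ≠ 0).card : ℝ) ≤ α * m)
    (hE : linf E ≤ s / √((m : ℝ) * n)) :
    |(Eᵀ *ᵥ u) j| ≤ α * s * √((m : ℝ) / n) * vinf u := by
  have hlinf : 0 ≤ linf E := (abs_nonneg _).trans (abs_le_linf E ⟨0, hm⟩ j)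
  calc |(Eᵀ *ᵥ u) j|
      ≤ (univ.filter fun p => E p j ≠ 0).card * (linf E * vinf u) :=
        abs_dotProduct_le_card_support_mul (fun p => E p j) u (fun p => abs_le_linf E p j)
          (abs_le_vinf u)
    _ ≤ α * m * (s / √((m : ℝ) * n) * vinf u) :=
        mul_le_mul hcol (mul_le_mul_of_nonneg_right hE (vinf_nonneg u))
          (mul_nonneg hlinf (vinf_nonneg u)) ((Nat.cast_nonneg _).trans hcol)
    _ = α * s * √((m : ℝ) / n) * vinf u := by
        rw [Real.sqrt_mul (Nat.cast_nonneg _), Real.sqrt_div' _ (Nat.cast_nonneg _)]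
        field_simp
        rw [Real.sq_sqrt (Nat.cast_nonneg _)]
        ring

lemma abs_sum_le_sum_of_subset {ι : Type*} {T U : Finset ι} (hTU : T ⊆ U) (x b : ι → ℝ)
    (hb : ∀ t ∈ U, 0 ≤ b t) (hx : ∀ t ∈ T, |x t| ≤ b t) : |∑ t ∈ T, x t| ≤ ∑ t ∈ U, b t :=
  (abs_sum_le_sum_abs _ _).trans <| (sum_le_sum hx).trans <|
    sum_le_sum_of_subset_of_nonneg hTU fun t ht _ => hb t ht

lemma abs_transpose_transfer_mulVec_apply_le {ι κ : Type*} {d : ℕ} (mr nr : κ → ℕ) (r : κ)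
    (s : Finset ι) (g : ι → Fin (nr r)) (hg : Set.BijOn g s Set.univ) (T : ι → Finset κ)
    (U : Finset κ) (hTU : ∀ i ∈ s, T i ⊆ U) (Q : (t : κ) → ι → Matrix (Fin (mr t)) (Fin d) ℝ)
    (P : ι → κ → Matrix (Fin d) (Fin d) ℝ) (w : (i : ι) → (t : κ) → Fin (mr t) → ℝ)
    (σ : κ → ℝ) (hσ : ∀ t, 0 < σ t) (hm : ∀ t, 0 < mr t) (hn : ∀ t, 0 < nr t) {ν : ℝ}
    (hν : 0 ≤ ν) (β : κ → ℝ) (hβ : ∀ t ∈ U, 0 ≤ β t)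
    (hP : ∀ i ∈ s, ∀ t ∈ T i, spec (P i t) ≤
      √(σ r / σ t) * (((mr t : ℝ) * nr t) / ((mr r : ℝ) * nr r)) ^ ((1 : ℝ) / 4))
    (hQ : ∀ i p, l2 ((Q r i)ᵀ *ᵥ Pi.single p 1) ≤ ν * √((d : ℝ) / mr r))
    (hw : ∀ i ∈ s, ∀ t ∈ T i, l2 ((Q t i)ᵀ *ᵥ w i t) ≤ β t * σ t / √(nr t))
    (u : Fin (mr r) → ℝ) (j : Fin (nr r)) :
    |((∑ i ∈ s, ∑ t ∈ T i, Matrix.vecMulVec ((Q r i * P i t * (Q t i)ᵀ) *ᵥ w i t)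
        (Pi.single (g i) 1))ᵀ *ᵥ u) j| ≤
      (∑ t ∈ U, β t * (√(σ t / σ r) * (((mr t : ℝ) * nr r) / ((mr r : ℝ) * nr t)) ^ ((1 : ℝ) / 4))) *
        (ν * √d * σ r * √((mr r : ℝ) / nr r) * vinf u) := by
  obtain ⟨i, hi, rfl⟩ := hg.surjOn (Set.mem_univ j)
  have hC : 0 ≤ ν * √d * σ r * √((mr r : ℝ) / nr r) * vinf u :=
    mul_nonneg (by have := hσ r; positivity) (vinf_nonneg u)
  rw [transpose_sum_vecMulVec_single_mulVec_apply s T _ g hg.injOn u hi, sum_mul]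
  refine abs_sum_le_sum_of_subset (hTU i hi) _ _
    (fun t ht => mul_nonneg (mul_nonneg (hβ t ht) (by positivity)) hC) fun t ht => ?_
  exact abs_transfer_term_le _ _ _ _ _ (hσ r) (hσ t) (hm r) (hn r) (hm t) (hn t) hν
    (hP i hi t ht) (hQ i) (hw i hi t ht)

lemma l2_mulVec_col_sub_comm {m k n : ℕ} (A : Matrix (Fin k) (Fin m) ℝ)
    (X Y : Matrix (Fin m) (Fin n) ℝ) (j : Fin n) :
    l2 (A *ᵥ fun p => (X - Y) p j) = l2 (A *ᵥ fun p => (Y - X) p j) := by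
  rw [← l2_neg, ← Matrix.mulVec_neg]
  congr 2
  ext p
  simp

lemma le_sum_mul_sqrt_div_mul_rpow_quarter {κ : Type*} (m n : κ → ℕ) (σ α : κ → ℝ)
    (hm : ∀ t, 0 < m t) (hn : ∀ t, 0 < n t) (hσ : ∀ t, 0 < σ t) (hα : ∀ t, 0 ≤ α t)
    {U : Finset κ} {r : κ} (hr : r ∈ U) :
    α r ≤ ∑ t ∈ U, α t * √(σ t / σ r) *
      (((m t : ℝ) * n r) / ((m r : ℝ) * n t)) ^ ((1 : ℝ) / 4) := by
  refine le_of_eq_of_le ?_ (single_le_sum (fun t _ => by have := hα t; have := hσ t; positivity) hr)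
  have hmn : ((m r : ℝ) * n r) ≠ 0 := by have := hm r; have := hn r; positivity
  simp [div_self (hσ r).ne', div_self hmn]

theorem stmt7_general (n d Rn : ℕ) (k : ℕ)
    (mr nr : Fin Rn → ℕ) (hmr : ∀ t, 0 < mr t) (hnr : ∀ t, 0 < nr t)
    (I : Fin Rn → Finset (Fin n))
    (f : (t : Fin Rn) → Fin n → Fin (nr t))
    (hf : ∀ t, Set.BijOn (f t) ↑(I t) Set.univ)
    (Q : (t : Fin Rn) → Fin n → Matrix (Fin (mr t)) (Fin d) ℝ)
    (P : Fin n → Fin Rn → Fin Rn → Matrix (Fin d) (Fin d) ℝ)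
    (σs : Fin Rn → ℝ) (hσ : ∀ t, 0 < σs t)
    (L Lstar S Sstar E : (t : Fin Rn) → Matrix (Fin (mr t)) (Fin (nr t)) ℝ)
    (hEdef : ∀ t, E t = Sstar t - S t)
    (α : Fin Rn → ℝ) (hα : ∀ t, 0 < α t)
    (ν l₀ s₀ q : ℝ) (hν : 0 < ν) (hl₀ : 0 < l₀) (hs₀ : 0 < s₀) (hq : 0 < q)
    (r : Fin Rn) (hIr : (I r).Nonempty)
    (Ibar : Fin n → Finset (Fin Rn))
    (hIbar : ∀ i, Ibar i = Finset.univ.filter fun t => i ∈ I t)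
    (U : Finset (Fin Rn))
    (hU : U = (I r).biUnion fun i => Finset.univ.filter fun t => i ∈ I t)
    (ω αt : ℝ)
    (hω : ω = ∑ t ∈ U, Real.sqrt (σs t / σs r) *
      (((mr t : ℝ) * nr r) / ((mr r : ℝ) * nr t)) ^ ((1 : ℝ) / 4))
    (hαt : αt = ∑ t ∈ U, α t * Real.sqrt (σs t / σs r) *
      (((mr t : ℝ) * nr r) / ((mr r : ℝ) * nr t)) ^ ((1 : ℝ) / 4))
    (h1 : ∀ i ∈ I r, ∀ t ∈ Ibar i,
      l2 ((Q t i)ᵀ *ᵥ fun p => (L t - Lstar t) p (f t i)) ≤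
        l₀ * σs t * q ^ k / Real.sqrt (nr t))
    (h2col : ∀ t ∈ U, ∀ j : Fin (nr t),
      ((Finset.univ.filter fun p => E t p j ≠ 0).card : ℝ) ≤ α t * mr t)
    (h2inf : ∀ t ∈ U, linf (E t) ≤ s₀ * σs t * q ^ k / Real.sqrt ((mr t : ℝ) * nr t))
    (h3 : ∀ i ∈ I r, ∀ t ∈ Ibar i,
      spec (P i r t) ≤ Real.sqrt (σs r / σs t) *
        (((mr t : ℝ) * nr t) / ((mr r : ℝ) * nr r)) ^ ((1 : ℝ) / 4))
    (h4 : ∀ (t : Fin Rn) (i : Fin n) (p : Fin (mr t)),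
      l2 ((Q t i)ᵀ *ᵥ Pi.single p 1) ≤ ν * Real.sqrt ((d : ℝ) / mr t))
    (G F Mr : Matrix (Fin (mr r)) (Fin (nr r)) ℝ)
    (hG : G = ∑ i ∈ I r, ∑ t ∈ Ibar i, Matrix.vecMulVec
      ((Q r i * P i r t * (Q t i)ᵀ) *ᵥ fun p => (L t - Lstar t) p (f t i))
      (Pi.single (f r i) 1))
    (hF : F = ∑ i ∈ I r, ∑ t ∈ Ibar i, Matrix.vecMulVec
      ((Q r i * P i r t * (Q t i)ᵀ) *ᵥ fun p => (S t - Sstar t) p (f t i))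
      (Pi.single (f r i) 1))
    (hM : Mr = G + F + E r) :
    ∀ u : Fin (mr r) → ℝ,
      vinf (Mrᵀ *ᵥ u) ≤
        (l₀ * ν * Real.sqrt d * ω + s₀ * (1 + ν ^ 2 * d) * αt) *
          σs r * q ^ k * Real.sqrt ((mr r : ℝ) / nr r) * vinf u := by
  intro u
  obtain rfl : E = fun t => Sstar t - S t := funext hEdef
  have hTU : ∀ i ∈ I r, Ibar i ⊆ U := fun i hi => by
    rw [hU, hIbar]
    exact subset_biUnion_of_mem (fun i => univ.filter fun t => i ∈ I t) hi
  have hrU : r ∈ U := by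
    obtain ⟨i, hi⟩ := hIr
    exact hTU i hi (by simp [hIbar, hi])
  set C := ν * √d * σs r * √((mr r : ℝ) / nr r) * vinf u
  have hGj : ∀ j, |(Gᵀ *ᵥ u) j| ≤ l₀ * q ^ k * ω * C := fun j => by
    rw [hG, hω, mul_sum]
    exact abs_transpose_transfer_mulVec_apply_le mr nr r (I r) (f r) (hf r) Ibar U hTU Q
      (fun i t => P i r t) (fun i t p => (L t - Lstar t) p (f t i)) σs hσ hmr hnr hν.le
      (fun _ => l₀ * q ^ k) (fun _ _ => by positivity) h3 (fun i => h4 r i)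
      (fun i hi t ht => (h1 i hi t ht).trans_eq (by ring)) u j
  have hFcol : ∀ i ∈ I r, ∀ t ∈ Ibar i, l2 ((Q t i)ᵀ *ᵥ fun p => (S t - Sstar t) p (f t i)) ≤
      s₀ * ν * √d * q ^ k * α t * σs t / √(nr t) := fun i hi t ht =>
    (l2_mulVec_col_sub_comm _ _ _ _).trans_le
      ((l2_mulVec_col_le_of_sparse (Q t i) _ (f t i) (hmr t) (hnr t) hν.le
        (h2col t (hTU i hi ht) _) (h2inf t (hTU i hi ht)) (h4 t i)).trans_eq (by ring))
  have hFj : ∀ j, |(Fᵀ *ᵥ u) j| ≤ s₀ * ν * √d * q ^ k * αt * C := fun j => by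
    rw [hF]
    refine (abs_transpose_transfer_mulVec_apply_le mr nr r (I r) (f r) (hf r) Ibar U hTU Q
      (fun i t => P i r t) (fun i t p => (S t - Sstar t) p (f t i)) σs hσ hmr hnr hν.le
      (fun t => s₀ * ν * √d * q ^ k * α t) (fun t _ => by have := hα t; positivity) h3
      (fun i => h4 r i) hFcol u j).trans_eq ?_
    rw [hαt, mul_sum]
    exact congrArg (· * C) (sum_congr rfl fun t _ => by ring)
  have hEj : ∀ j, |((Sstar r - S r)ᵀ *ᵥ u) j| ≤
      αt * (s₀ * σs r * q ^ k) * √((mr r : ℝ) / nr r) * vinf u := fun j => by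
    refine (abs_transpose_mulVec_apply_le_of_sparse _ u j (hmr r) (hnr r) (h2col r hrU j)
      (h2inf r hrU)).trans ?_
    have := hσ r
    rw [hαt]
    gcongr ?_ * _ * _ * _
    · exact vinf_nonneg u
    · exact le_sum_mul_sqrt_div_mul_rpow_quarter mr nr σs α hmr hnr hσ (fun t => (hα t).le) hrU
  have hdd : √(d : ℝ) * √d = d := Real.mul_self_sqrt (Nat.cast_nonneg _)
  have : Nonempty (Fin (nr r)) := ⟨⟨0, hnr r⟩⟩
  refine ciSup_le fun j => ?_
  calc |(Mrᵀ *ᵥ u) j| ≤ |(Gᵀ *ᵥ u) j| + |(Fᵀ *ᵥ u) j| + |((Sstar r - S r)ᵀ *ᵥ u) j| := by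
        rw [hM]
        simp only [Matrix.transpose_add, Matrix.add_mulVec, Pi.add_apply]
        exact abs_add_three _ _ _
    _ ≤ l₀ * q ^ k * ω * C + s₀ * ν * √d * q ^ k * αt * C +
          αt * (s₀ * σs r * q ^ k) * √((mr r : ℝ) / nr r) * vinf u := by
        gcongr ?_ + ?_ + ?_
        exacts [hGj j, hFj j, hEj j]
    _ = _ := by
        linear_combination s₀ * ν ^ 2 * αt * σs r * q ^ k * √((mr r : ℝ) / nr r) * vinf u * hdd

/-- Lemma: multi-region bound on `‖M_rᵀu‖_{ℓ∞}`. -/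
theorem stmt7 (n d Rn : ℕ) (k : ℕ) (hn : 0 < n) (hd : 0 < d)
    (mr nr : Fin Rn → ℕ) (hmr : ∀ t, 0 < mr t) (hnr : ∀ t, 0 < nr t)
    (I : Fin Rn → Finset (Fin n)) (hcard : ∀ t, (I t).card = nr t)
    (f : (t : Fin Rn) → Fin n → Fin (nr t))
    (hf : ∀ t, Set.BijOn (f t) ↑(I t) Set.univ)
    (Q : (t : Fin Rn) → Fin n → Matrix (Fin (mr t)) (Fin d) ℝ)
    (hQortho : ∀ t i, (Q t i)ᵀ * Q t i = 1)
    (P : Fin n → Fin Rn → Fin Rn → Matrix (Fin d) (Fin d) ℝ)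
    (σs : Fin Rn → ℝ) (hσ : ∀ t, 0 < σs t)
    (L Lstar S Sstar E : (t : Fin Rn) → Matrix (Fin (mr t)) (Fin (nr t)) ℝ)
    (hEdef : ∀ t, E t = Sstar t - S t)
    (α : Fin Rn → ℝ) (hα : ∀ t, 0 < α t)
    (ν l₀ s₀ q : ℝ) (hν : 0 < ν) (hl₀ : 0 < l₀) (hs₀ : 0 < s₀) (hq : 0 < q)
    (r : Fin Rn) (hIr : (I r).Nonempty)
    (Ibar : Fin n → Finset (Fin Rn))
    (hIbar : ∀ i, Ibar i = Finset.univ.filter fun t => i ∈ I t)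
    (U : Finset (Fin Rn))
    (hU : U = (I r).biUnion fun i => Finset.univ.filter fun t => i ∈ I t)
    (ω αt : ℝ)
    (hω : ω = ∑ t ∈ U, Real.sqrt (σs t / σs r) *
      (((mr t : ℝ) * nr r) / ((mr r : ℝ) * nr t)) ^ ((1 : ℝ) / 4))
    (hαt : αt = ∑ t ∈ U, α t * Real.sqrt (σs t / σs r) *
      (((mr t : ℝ) * nr r) / ((mr r : ℝ) * nr t)) ^ ((1 : ℝ) / 4))
    (h1 : ∀ i ∈ I r, ∀ t ∈ Ibar i,
      l2 ((Q t i)ᵀ *ᵥ fun p => (L t - Lstar t) p (f t i)) ≤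
        l₀ * σs t * q ^ k / Real.sqrt (nr t))
    (h2col : ∀ t ∈ U, ∀ j : Fin (nr t),
      ((Finset.univ.filter fun p => E t p j ≠ 0).card : ℝ) ≤ α t * mr t)
    (h2inf : ∀ t ∈ U, linf (E t) ≤ s₀ * σs t * q ^ k / Real.sqrt ((mr t : ℝ) * nr t))
    (h3 : ∀ i ∈ I r, ∀ t ∈ Ibar i,
      spec (P i r t) ≤ Real.sqrt (σs r / σs t) *
        (((mr t : ℝ) * nr t) / ((mr r : ℝ) * nr r)) ^ ((1 : ℝ) / 4))
    (h4 : ∀ (t : Fin Rn) (i : Fin n) (p : Fin (mr t)),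
      l2 ((Q t i)ᵀ *ᵥ Pi.single p 1) ≤ ν * Real.sqrt ((d : ℝ) / mr t))
    (G F Mr : Matrix (Fin (mr r)) (Fin (nr r)) ℝ)
    (hG : G = ∑ i ∈ I r, ∑ t ∈ Ibar i, Matrix.vecMulVec
      ((Q r i * P i r t * (Q t i)ᵀ) *ᵥ fun p => (L t - Lstar t) p (f t i))
      (Pi.single (f r i) 1))
    (hF : F = ∑ i ∈ I r, ∑ t ∈ Ibar i, Matrix.vecMulVec
      ((Q r i * P i r t * (Q t i)ᵀ) *ᵥ fun p => (S t - Sstar t) p (f t i))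
      (Pi.single (f r i) 1))
    (hM : Mr = G + F + E r) :
    ∀ u : Fin (mr r) → ℝ,
      vinf (Mrᵀ *ᵥ u) ≤
        (l₀ * ν * Real.sqrt d * ω + s₀ * (1 + ν ^ 2 * d) * αt) *
          σs r * q ^ k * Real.sqrt ((mr r : ℝ) / nr r) * vinf u :=
  stmt7_general n d Rn k mr nr hmr hnr I f hf Q P σs hσ L Lstar S Sstar E hEdef α hα ν l₀ s₀ q hν
    hl₀ hs₀ hq r hIr Ibar hIbar U hU ω αt hω hαt h1 h2col h2inf h3 h4 G F Mr hG hF hM
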